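/- For every natural number k ≥ 1, the dimer hopping matrix decomposes as H_k = k · (c_kᵀ · c_k − d_kᵀ · d_k). (This is the finite-dimensional form of the representation H = c†c − d†d of the hopping Hamiltonian.) -/
import Mathlib


open Matrix

/-- The dimer hopping matrix `H_k` restricted to the `k`-particle subspace:
a `(k+1) × (k+1)` symmetric tridiagonal matrix with off-diagonal entries
`√((α+1)(k−α))`. -/
noncomputable def hopH (k : ℕ) : Matrix (Fin (k+1)) (Fin (k+1)) ℝ :=
  fun α β =>
    if (α : ℕ) + 1 = (β : ℕ) then Real.sqrt ((((α : ℕ) + 1) * (k - (α : ℕ)) : ℕ))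
    else if (β : ℕ) + 1 = (α : ℕ) then Real.sqrt ((((β : ℕ) + 1) * (k - (β : ℕ)) : ℕ))
    else 0

/-- The `k × (k+1)` lowering matrix `c_k`, with entries
`c_k[β,β] = √(k−β)/√(2k)`, `c_k[β,β+1] = √(β+1)/√(2k)`, and `0` otherwise. -/
noncomputable def cmat (k : ℕ) : Matrix (Fin k) (Fin (k+1)) ℝ :=
  fun β α =>
    if (α : ℕ) = (β : ℕ) then Real.sqrt ((k : ℝ) - (β : ℕ)) / Real.sqrt (2 * (k : ℝ))
    else if (α : ℕ) = (β : ℕ) + 1 then Real.sqrt (((β : ℕ) : ℝ) + 1) / Real.sqrt (2 * (k : ℝ))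
    else 0

/-- The `k × (k+1)` lowering matrix `d_k`, with entries
`d_k[β,β] = √(k−β)/√(2k)`, `d_k[β,β+1] = −√(β+1)/√(2k)`, and `0` otherwise. -/
noncomputable def dmat (k : ℕ) : Matrix (Fin k) (Fin (k+1)) ℝ :=
  fun β α =>
    if (α : ℕ) = (β : ℕ) then Real.sqrt ((k : ℝ) - (β : ℕ)) / Real.sqrt (2 * (k : ℝ))
    else if (α : ℕ) = (β : ℕ) + 1 then -Real.sqrt (((β : ℕ) : ℝ) + 1) / Real.sqrt (2 * (k : ℝ))
    else 0

/-- For `k ≥ 1`, the dimer hopping matrix decomposes as `H_k = k (c_kᵀ c_k − d_kᵀ d_k)`: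
the finite-dimensional form of `H = c†c − d†d`. -/
theorem hopH_eq_cc_sub_dd (k : ℕ) (hk : 1 ≤ k) :
    hopH k = (k : ℝ) • ((cmat k)ᵀ * cmat k - (dmat k)ᵀ * dmat k) := by
  have hk0 : (k:ℝ) ≠ 0 := by positivity
  have hkpos : (0:ℝ) < 2 * (k:ℝ) := by positivity
  have h2k : Real.sqrt (2 * (k:ℝ)) * Real.sqrt (2 * (k:ℝ)) = 2 * (k:ℝ) :=
    Real.mul_self_sqrt hkpos.le
  ext α β
  simp only [Matrix.smul_apply, Matrix.sub_apply, Matrix.mul_apply, Matrix.transpose_apply,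
    smul_eq_mul, ← Finset.sum_sub_distrib]
  by_cases h1 : (α : ℕ) + 1 = (β : ℕ)
  · have hαk : (α : ℕ) < k := by have := β.isLt; omega
    rw [Finset.sum_eq_single (⟨(α:ℕ), hαk⟩ : Fin k)]
    · have hc1 : cmat k ⟨(α:ℕ), hαk⟩ α = Real.sqrt ((k : ℝ) - (α:ℕ)) / Real.sqrt (2 * (k:ℝ)) := by
        simp [cmat]
      have hc2 : cmat k ⟨(α:ℕ), hαk⟩ β = Real.sqrt (((α:ℕ) : ℝ) + 1) / Real.sqrt (2 * (k:ℝ)) := by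
        simp only [cmat]
        rw [if_neg (show ¬((β:ℕ) = (α:ℕ)) by omega), if_pos (show (β:ℕ) = (α:ℕ) + 1 by omega)]
      have hd1 : dmat k ⟨(α:ℕ), hαk⟩ α = Real.sqrt ((k : ℝ) - (α:ℕ)) / Real.sqrt (2 * (k:ℝ)) := by
        simp [dmat]
      have hd2 : dmat k ⟨(α:ℕ), hαk⟩ β = -Real.sqrt (((α:ℕ) : ℝ) + 1) / Real.sqrt (2 * (k:ℝ)) := by
        simp only [dmat]
        rw [if_neg (show ¬((β:ℕ) = (α:ℕ)) by omega), if_pos (show (β:ℕ) = (α:ℕ) + 1 by omega)]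
      rw [hc1, hc2, hd1, hd2, div_mul_div_comm, div_mul_div_comm, h2k, hopH, if_pos h1]
      have hcast : ((((α:ℕ) + 1) * (k - (α:ℕ)) : ℕ) : ℝ) = (((α:ℕ):ℝ) + 1) * ((k:ℝ) - (α:ℕ)) := by
        push_cast [Nat.cast_sub hαk.le]; ring
      rw [hcast, Real.sqrt_mul (by positivity)]
      field_simp
      ring
    · intro b _ hb
      have hbne : (b : ℕ) ≠ (α : ℕ) := fun h => hb (Fin.ext h)
      simp only [cmat, dmat]
      split_ifs <;> first | omega | ring1
    · simp
  · by_cases h2 : (β : ℕ) + 1 = (α : ℕ)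
    · have hβk : (β : ℕ) < k := by have := α.isLt; omega
      rw [Finset.sum_eq_single (⟨(β:ℕ), hβk⟩ : Fin k)]
      · have hc1 : cmat k ⟨(β:ℕ), hβk⟩ β = Real.sqrt ((k : ℝ) - (β:ℕ)) / Real.sqrt (2 * (k:ℝ)) := by
          simp [cmat]
        have hc2 : cmat k ⟨(β:ℕ), hβk⟩ α = Real.sqrt (((β:ℕ) : ℝ) + 1) / Real.sqrt (2 * (k:ℝ)) := by
          simp only [cmat]
          rw [if_neg (show ¬((α:ℕ) = (β:ℕ)) by omega), if_pos (show (α:ℕ) = (β:ℕ) + 1 by omega)]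
        have hd1 : dmat k ⟨(β:ℕ), hβk⟩ β = Real.sqrt ((k : ℝ) - (β:ℕ)) / Real.sqrt (2 * (k:ℝ)) := by
          simp [dmat]
        have hd2 : dmat k ⟨(β:ℕ), hβk⟩ α = -Real.sqrt (((β:ℕ) : ℝ) + 1) / Real.sqrt (2 * (k:ℝ)) := by
          simp only [dmat]
          rw [if_neg (show ¬((α:ℕ) = (β:ℕ)) by omega), if_pos (show (α:ℕ) = (β:ℕ) + 1 by omega)]
        rw [hc1, hc2, hd1, hd2, div_mul_div_comm, div_mul_div_comm, h2k, hopH,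
          if_neg h1, if_pos h2]
        have hcast : ((((β:ℕ) + 1) * (k - (β:ℕ)) : ℕ) : ℝ) = (((β:ℕ):ℝ) + 1) * ((k:ℝ) - (β:ℕ)) := by
          push_cast [Nat.cast_sub hβk.le]; ring
        rw [hcast, Real.sqrt_mul (by positivity)]
        field_simp
        ring
      · intro b _ hb
        have hbne : (b : ℕ) ≠ (β : ℕ) := fun h => hb (Fin.ext h)
        simp only [cmat, dmat]
        split_ifs <;> first | omega | ring1
      · simp
    · rw [hopH, if_neg h1, if_neg h2, Finset.sum_eq_zero, mul_zero]
      intro γ _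
      simp only [cmat, dmat]
      split_ifs <;> first | omega | ring1
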